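/- Let l be an odd prime and n ≥ 2 an integer. Let G be a finite group of order l^{n+1} with a normal cyclic subgroup H of order l^n generated by an element τ, and suppose x ∈ G is an element not lying in H (so that its class generates the quotient G/H, which is cyclic of order l) satisfying xτx⁻¹ = τ^{l^{n-1}+1}. Then there exists σ ∈ G with σ^l = 1 and στσ⁻¹ = τ^{l^{n-1}+1} such that σ and τ generate G; consequently G is isomorphic to the group ⟨σ, τ : σ^l = τ^{l^n} = 1, στσ⁻¹ = τ^{l^{n-1}+1}⟩. -/
import Mathlib

private lemma conj_pow_pow {G : Type*} [Group G] {t s : G} {r : ℕ}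
    (h : t * s * t⁻¹ = s ^ r) (j : ℕ) : t ^ j * s * (t ^ j)⁻¹ = s ^ r ^ j := by
  induction j with
  | zero => simp
  | succ j ih =>
    calc t ^ (j + 1) * s * (t ^ (j + 1))⁻¹
        = t ^ j * (t * s * t⁻¹) * (t ^ j)⁻¹ := by rw [pow_succ]; group
      _ = (t ^ j * s * (t ^ j)⁻¹) ^ r := by rw [h, conj_pow]
      _ = s ^ r ^ (j + 1) := by rw [ih, ← pow_mul, pow_succ]

private lemma conj_pow_pow' {G : Type*} [Group G] {t s : G} {r : ℕ}
    (h : t * s * t⁻¹ = s ^ r) (j a : ℕ) :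
    t ^ j * s ^ a * (t ^ j)⁻¹ = s ^ (r ^ j * a) := by
  rw [← conj_pow, conj_pow_pow h, ← pow_mul]

private lemma swap_pow_pow {G : Type*} [Group G] {t s : G} {r : ℕ}
    (h : t * s * t⁻¹ = s ^ r) (j a : ℕ) :
    t ^ j * s ^ a = s ^ (r ^ j * a) * t ^ j := by
  rw [← conj_pow_pow' h j a]; group

private lemma telescope_pow {G : Type*} [Group G] {t s : G} {r : ℕ}
    (h : t * s * t⁻¹ = s ^ r) (a j : ℕ) :
    (s ^ a * t) ^ j = s ^ (a * ∑ k ∈ Finset.range j, r ^ k) * t ^ j := by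
  induction j with
  | zero => simp
  | succ j ih =>
    calc (s ^ a * t) ^ (j + 1) = (s ^ a * t) ^ j * (s ^ a * t) := pow_succ _ _
      _ = s ^ (a * ∑ k ∈ Finset.range j, r ^ k) * (t ^ j * s ^ a) * t := by
          rw [ih]; group
      _ = s ^ (a * ∑ k ∈ Finset.range j, r ^ k) * (s ^ (r ^ j * a) * t ^ j) * t := by
          rw [swap_pow_pow h]
      _ = s ^ (a * ∑ k ∈ Finset.range (j + 1), r ^ k) * t ^ (j + 1) := by
          rw [Finset.sum_range_succ, Nat.mul_add, pow_add, pow_succ, mul_comm a (r ^ j)]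
          group

private lemma geom_sum_mod (l n : ℕ) (hl : l.Prime) (hlodd : Odd l) (hn : 2 ≤ n) :
    (∑ k ∈ Finset.range l, (l ^ (n - 1) + 1) ^ k) ≡ l [MOD l ^ n] := by
  rw [← ZMod.natCast_eq_natCast_iff]
  push_cast
  set L : ZMod (l ^ n) := (l : ZMod (l ^ n)) ^ (n - 1) with hL
  have hL2 : L * L = 0 := by
    have h0 : ((l ^ (n - 1) * l ^ (n - 1) : ℕ) : ZMod (l ^ n)) = 0 := by
      rw [ZMod.natCast_eq_zero_iff, ← pow_add]
      exact pow_dvd_pow l (by omega)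
    push_cast at h0
    exact h0
  have hpow : ∀ k : ℕ, (L + 1) ^ k = 1 + (k : ZMod (l ^ n)) * L := by
    intro k
    induction k with
    | zero => simp
    | succ k ih =>
      have expand : (1 + (k : ZMod (l ^ n)) * L) * (L + 1)
          = 1 + ((k : ZMod (l ^ n)) + 1) * L + (k : ZMod (l ^ n)) * (L * L) := by ring
      rw [pow_succ, ih, expand, hL2]
      push_cast
      ring
  have hsum0 : ((∑ k ∈ Finset.range l, k : ℕ) : ZMod (l ^ n)) * L = 0 := by
    obtain ⟨w, hw⟩ := hlodd
    have hsum : (∑ k ∈ Finset.range l, k) = l * w := by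
      have h2 := Finset.sum_range_id_mul_two l
      have h3 : l * (l - 1) = l * w * 2 := by
        rw [show l - 1 = 2 * w by omega]; ring
      omega
    have : ((∑ k ∈ Finset.range l, k : ℕ) : ZMod (l ^ n)) * L
        = ((∑ k ∈ Finset.range l, k) * l ^ (n - 1) : ℕ) := by push_cast; rfl
    rw [this, ZMod.natCast_eq_zero_iff, hsum]
    have h4 : l * w * l ^ (n - 1) = w * l ^ n := by
      rw [mul_comm l w, mul_assoc, ← pow_succ', show n - 1 + 1 = n by omega]
    rw [h4]
    exact dvd_mul_left _ _
  calc (∑ k ∈ Finset.range l, ((l : ZMod (l ^ n)) ^ (n - 1) + 1) ^ k)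
      = ∑ k ∈ Finset.range l, (1 + (k : ZMod (l ^ n)) * L) := by
        refine Finset.sum_congr rfl fun k _ => ?_
        rw [← hL, hpow]
    _ = (l : ZMod (l ^ n)) + ((∑ k ∈ Finset.range l, k : ℕ) : ZMod (l ^ n)) * L := by
        rw [Finset.sum_add_distrib, Finset.sum_const, Finset.card_range, nsmul_eq_mul,
          mul_one, Nat.cast_sum, Finset.sum_mul]
    _ = (l : ZMod (l ^ n)) := by rw [hsum0, add_zero]



/-- The relations of the presentation
`⟨σ, τ : σ^l = τ^(l^n) = 1, στσ⁻¹ = τ^(l^(n-1)+1)⟩`, where the generator `0` stands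
for `σ` and the generator `1` stands for `τ`. -/
def modRels (l n : ℕ) : Set (FreeGroup (Fin 2)) :=
  {FreeGroup.of 0 ^ l, FreeGroup.of 1 ^ l ^ n,
   FreeGroup.of 0 * FreeGroup.of 1 * (FreeGroup.of 0)⁻¹ *
     (FreeGroup.of 1 ^ (l ^ (n - 1) + 1))⁻¹}

/-- The group `C(l^n) ⋊_μ C(l) = ⟨σ, τ : σ^l = τ^(l^n) = 1, στσ⁻¹ = τ^(l^(n-1)+1)⟩`. -/
abbrev ModMaximalGroup (l n : ℕ) : Type := PresentedGroup (modRels l n)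

/-- Lemma 2.1: a group `G` of order `l^(n+1)` with a normal cyclic subgroup of order
`l^n` generated by `τ` and an element `x ∉ ⟨τ⟩` with `xτx⁻¹ = τ^(l^(n-1)+1)` contains an
element `σ` of order dividing `l` with `στσ⁻¹ = τ^(l^(n-1)+1)` generating `G` together
with `τ`; consequently `G ≅ C(l^n) ⋊_μ C(l)`. -/
theorem exists_sigma_of_order_pow_succ (l n : ℕ) (hl : l.Prime) (hlodd : Odd l)
    (hn : 2 ≤ n) (G : Type*) [Group G] [Finite G] (hcard : Nat.card G = l ^ (n + 1))
    (τ : G) (hτ : orderOf τ = l ^ n) (hnorm : (Subgroup.zpowers τ).Normal)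
    (x : G) (hx : x ∉ Subgroup.zpowers τ)
    (hconj : x * τ * x⁻¹ = τ ^ (l ^ (n - 1) + 1)) :
    (∃ σ : G, σ ^ l = 1 ∧ σ * τ * σ⁻¹ = τ ^ (l ^ (n - 1) + 1) ∧
      Subgroup.closure {σ, τ} = ⊤) ∧
    Nonempty (G ≃* ModMaximalGroup l n) := by
  haveI := hnorm
  set r : ℕ := l ^ (n - 1) + 1 with hr
  set N : ℕ := l ^ n with hN
  have hN0 : 0 < N := pow_pos hl.pos n
  have hl0 : 0 < l := hl.pos
  -- index of zpowers τ is l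
  have hHcard : Nat.card (Subgroup.zpowers τ) = N := by rw [Nat.card_zpowers, hτ]
  have hindex : (Subgroup.zpowers τ).index = l := by
    have h1 := Subgroup.card_mul_index (Subgroup.zpowers τ)
    rw [hHcard, hcard, pow_succ, ← hN] at h1
    exact Nat.eq_of_mul_eq_mul_left hN0 h1
  -- x ^ l lies in the cyclic subgroup
  have hxl : x ^ l ∈ Subgroup.zpowers τ := by
    rw [← hindex]; exact Subgroup.pow_index_mem _ x
  obtain ⟨k, hk⟩ := Subgroup.mem_zpowers_iff.mp hxl
  set m : ℕ := (k % (N : ℤ)).toNat with hmdef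
  have hm : τ ^ m = x ^ l := by
    have h1 : τ ^ ((k % (N : ℤ))) = τ ^ k := by
      have := zpow_mod_orderOf τ k
      rwa [hτ] at this
    rw [← hk, ← h1, hmdef, ← zpow_natCast,
      Int.toNat_of_nonneg (Int.emod_nonneg k (by exact_mod_cast hN0.ne'))]
  -- l divides m
  have hldvdm : l ∣ m := by
    have h1 : x * τ ^ m * x⁻¹ = τ ^ m := by rw [hm]; group
    have h2 : x * τ ^ m * x⁻¹ = τ ^ (r * m) := by
      rw [← conj_pow, hconj, ← pow_mul]
    have h3 : r * m ≡ m [MOD N] := by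
      have := pow_eq_pow_iff_modEq.mp (h2.symm.trans h1)
      rwa [hτ] at this
    have h4 : N ∣ r * m - m := (Nat.modEq_iff_dvd' (Nat.le_mul_of_pos_left m (by omega))).mp h3.symm
    have h5 : r * m - m = l ^ (n - 1) * m := by
      have : r * m = l ^ (n - 1) * m + m := by rw [hr]; ring
      omega
    rw [h5] at h4
    have h6 : l ^ (n - 1) * l ∣ l ^ (n - 1) * m := by
      rwa [← pow_succ, show n - 1 + 1 = n by omega, ← hN]
    exact (mul_dvd_mul_iff_left (pow_ne_zero (n - 1) hl0.ne')).mp h6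
  set m' : ℕ := m / l with hm'def
  have hmm' : m = l * m' := (Nat.mul_div_cancel' hldvdm).symm
  obtain ⟨c, hc⟩ : ∃ c, N = c + 1 := ⟨N - 1, by omega⟩
  set s : ℕ := m' * c with hsdef
  set S : ℕ := ∑ k ∈ Finset.range l, r ^ k with hSdef
  have hS : S ≡ l [MOD N] := geom_sum_mod l n hl hlodd hn
  have hdvd_e : N ∣ s * S + m := by
    have h1 : s * S + m ≡ s * l + m [MOD N] := (hS.mul_left s).add_right m
    have h2 : s * l + m = m' * l * N := by rw [hsdef, hmm', hc]; ring
    have h3 : N ∣ s * l + m := h2 ▸ dvd_mul_left N (m' * l)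
    exact Nat.modEq_zero_iff_dvd.mp (h1.trans (Nat.modEq_zero_iff_dvd.mpr h3))
  -- the element σ
  set σ : G := τ ^ s * x with hσdef
  have hσl : σ ^ l = 1 := by
    rw [hσdef, telescope_pow hconj s l, ← hSdef, ← hm, ← pow_add]
    rw [← orderOf_dvd_iff_pow_eq_one, hτ]
    exact hdvd_e
  have hσc : σ * τ * σ⁻¹ = τ ^ r := by
    have h1 : σ * τ * σ⁻¹ = τ ^ s * (x * τ * x⁻¹) * (τ ^ s)⁻¹ := by
      rw [hσdef, mul_inv_rev]; group
    rw [h1, hconj, pow_mul_comm, mul_inv_cancel_right]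
  have hclosure : Subgroup.closure {σ, τ} = ⊤ := by
    set K : Subgroup G := Subgroup.closure {σ, τ} with hK
    have hσK : σ ∈ K := Subgroup.subset_closure (Set.mem_insert _ _)
    have hτK : τ ∈ K := Subgroup.subset_closure (Set.mem_insert_of_mem _ rfl)
    have hxK : x ∈ K := by
      have : (τ ^ s)⁻¹ * σ ∈ K := K.mul_mem (K.inv_mem (K.pow_mem hτK s)) hσK
      rwa [hσdef, inv_mul_cancel_left] at this
    have hHK : Subgroup.zpowers τ ≤ K := Subgroup.zpowers_le.mpr hτK
    have h1 : (Subgroup.zpowers τ).relIndex K * K.index = l := by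
      rw [Subgroup.relIndex_mul_index hHK, hindex]
    have h2 : K.index ∣ l := Dvd.intro_left _ h1
    rcases (Nat.Prime.eq_one_or_self_of_dvd hl _ h2) with h3 | h3
    · exact Subgroup.index_eq_one.mp h3
    · exfalso
      rw [h3] at h1
      have h4 : (Subgroup.zpowers τ).relIndex K = 1 := by
        have : 0 < l := hl0
        nlinarith [Nat.le_of_dvd hl0 h2]
      exact hx (Subgroup.relIndex_eq_one.mp h4 hxK)
  refine ⟨⟨σ, hσl, hσc, hclosure⟩, ?_⟩
  -- Part 2 : the presented group
  have hmk : ∀ w ∈ modRels l n, PresentedGroup.mk (modRels l n) w = 1 := fun w hw =>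
    (QuotientGroup.eq_one_iff w).mpr (Subgroup.subset_normalClosure hw)
  set Sg : ModMaximalGroup l n := PresentedGroup.of 0 with hSg
  set T : ModMaximalGroup l n := PresentedGroup.of 1 with hT
  have hrel1 : Sg ^ l = 1 := by
    have := hmk _ (Set.mem_insert _ _)
    rwa [map_pow] at this
  have hrel2 : T ^ N = 1 := by
    have := hmk _ (Set.mem_insert_of_mem _ (Set.mem_insert _ _))
    rwa [map_pow] at this
  have hrel3 : Sg * T * Sg⁻¹ = T ^ r := by
    have := hmk _ (Set.mem_insert_of_mem _ (Set.mem_insert_of_mem _ rfl))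
    simp only [map_mul, map_inv, map_pow] at this
    exact mul_inv_eq_one.mp this
  have hswap : ∀ b a : ℕ, Sg ^ b * T ^ a = T ^ (r ^ b * a) * Sg ^ b := fun b a =>
    swap_pow_pow hrel3 b a
  have hTred : ∀ a : ℕ, T ^ a = T ^ (a % N) := by
    intro a
    conv_lhs => rw [← Nat.div_add_mod a N]
    rw [pow_add, pow_mul, hrel2, one_pow, one_mul]
  have hSred : ∀ b : ℕ, Sg ^ b = Sg ^ (b % l) := by
    intro b
    conv_lhs => rw [← Nat.div_add_mod b l]
    rw [pow_add, pow_mul, hrel1, one_pow, one_mul]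
  have hSinv : Sg⁻¹ = Sg ^ (l - 1) := by
    apply inv_eq_of_mul_eq_one_right
    rw [← pow_succ', show l - 1 + 1 = l by omega, hrel1]
  have hTinv : T⁻¹ = T ^ (N - 1) := by
    apply inv_eq_of_mul_eq_one_right
    rw [← pow_succ', show N - 1 + 1 = N by omega, hrel2]
  have hform : ∀ p : ModMaximalGroup l n, ∃ a b : ℕ, p = T ^ a * Sg ^ b := by
    intro p
    have hp : p ∈ Subgroup.closure
        (Set.range (PresentedGroup.of : Fin 2 → ModMaximalGroup l n)) := by
      rw [PresentedGroup.closure_range_of]; exact Subgroup.mem_top p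
    refine Subgroup.closure_induction (p := fun g _ => ∃ a b : ℕ, g = T ^ a * Sg ^ b)
      ?_ ?_ ?_ ?_ hp
    · rintro y ⟨i, rfl⟩
      fin_cases i
      · exact ⟨0, 1, by simp [hSg]⟩
      · exact ⟨1, 0, by simp [hT]⟩
    · exact ⟨0, 0, by simp⟩
    · rintro p q hpc hqc ⟨a, b, rfl⟩ ⟨u, d, rfl⟩
      refine ⟨a + r ^ b * u, b + d, ?_⟩
      calc T ^ a * Sg ^ b * (T ^ u * Sg ^ d)
          = T ^ a * (Sg ^ b * T ^ u) * Sg ^ d := by group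
        _ = T ^ a * (T ^ (r ^ b * u) * Sg ^ b) * Sg ^ d := by rw [hswap]
        _ = T ^ (a + r ^ b * u) * Sg ^ (b + d) := by rw [pow_add, pow_add]; group
    · rintro p hpc ⟨a, b, rfl⟩
      refine ⟨r ^ ((l - 1) * b) * ((N - 1) * a), (l - 1) * b, ?_⟩
      rw [mul_inv_rev, ← inv_pow, ← inv_pow, hSinv, hTinv, ← pow_mul, ← pow_mul, hswap]
  have hgsurj : Function.Surjective
      (fun p : Fin N × Fin l => T ^ (p.1 : ℕ) * Sg ^ (p.2 : ℕ)) := by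
    intro p
    obtain ⟨a, b, rfl⟩ := hform p
    refine ⟨(⟨a % N, Nat.mod_lt a hN0⟩, ⟨b % l, Nat.mod_lt b hl0⟩), ?_⟩
    simp only
    rw [← hTred, ← hSred]
  haveI : Finite (ModMaximalGroup l n) := Finite.of_surjective _ hgsurj
  have hcardP : Nat.card (ModMaximalGroup l n) ≤ N * l := by
    have h1 := Nat.card_le_card_of_surjective _ hgsurj
    simpa using h1
  -- homomorphism to G
  set f : Fin 2 → G := ![σ, τ] with hf
  have hτN : τ ^ N = 1 := by rw [← hτ]; exact pow_orderOf_eq_one τ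
  have hrels : ∀ w ∈ modRels l n, FreeGroup.lift f w = 1 := by
    intro w hw
    simp only [modRels, Set.mem_insert_iff, Set.mem_singleton_iff] at hw
    rcases hw with rfl | rfl | rfl
    · rw [map_pow, FreeGroup.lift_apply_of]
      simpa [hf] using hσl
    · rw [map_pow, FreeGroup.lift_apply_of]
      simpa [hf] using hτN
    · simp only [map_mul, map_inv, map_pow, FreeGroup.lift_apply_of, hf,
        Matrix.cons_val_zero, Matrix.cons_val_one, Matrix.head_cons]
      exact mul_inv_eq_one.mpr hσc
  set φ := PresentedGroup.toGroup hrels with hφ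
  have hφ0 : φ Sg = σ := by
    rw [hSg, hφ, PresentedGroup.toGroup.of]
    simp [hf]
  have hφ1 : φ T = τ := by
    rw [hT, hφ, PresentedGroup.toGroup.of]
    simp [hf]
  have hφsurj : Function.Surjective φ := by
    rw [← MonoidHom.range_eq_top, ← top_le_iff, ← hclosure, Subgroup.closure_le]
    intro y hy
    rcases hy with rfl | hy
    · exact ⟨Sg, hφ0⟩
    · rw [Set.mem_singleton_iff] at hy
      subst hy
      exact ⟨T, hφ1⟩
  have hcardeq : Nat.card (ModMaximalGroup l n) = Nat.card G := by
    have h1 : Nat.card G ≤ Nat.card (ModMaximalGroup l n) :=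
      Nat.card_le_card_of_surjective φ hφsurj
    have h2 : Nat.card G = N * l := by rw [hcard, hN, pow_succ]
    omega
  have hbij : Function.Bijective φ :=
    (Nat.bijective_iff_surjective_and_card φ).mpr ⟨hφsurj, hcardeq⟩
  exact ⟨(MulEquiv.ofBijective φ hbij).symm⟩
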